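/- Comparison structure of the approximating drivers: For every integer m ≥ 1 there exists a map assigning to each pair of bounded Borel functions u, u' : ℝ → ℝ with ∫u² dν < ∞ and ∫(u')² dν < ∞ a Borel function k_m(u,u') : ℝ → ℝ such that: (i) f_m(z,u) − f_m(z,u') ≤ ∫_ℝ k_m(u,u')(e) (u(e) − u'(e)) ν(de) for all z ∈ ℝ; and (ii) for every M > 0 there exist constants C̲_{M,m} > 0 and C̄_{M,m} > 0 such that whenever sup_e |u(e)| ≤ M and sup_e |u'(e)| ≤ M, one has (−1 + C̲_{M,m}) 1_{|e| > 1/m} ≤ k_m(u,u')(e) ≤ C̄_{M,m} 1_{|e| > 1/m} for all e ∈ ℝ. -/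

import Mathlib

open MeasureTheory Set

noncomputable section

/-- The exponential penalty function `h_λ(x) = (e^{λx} − λx − 1)/λ`. -/
def hpen (lam x : ℝ) : ℝ := (Real.exp (lam * x) - lam * x - 1) / lam

/-- `φ(x) = arctan x` for `x > 0`, `φ(x) = x` for `x ≤ 0`. -/
def phi0 (x : ℝ) : ℝ := if 0 < x then Real.arctan x else x

/-- The truncation from above `φ_m(x) = φ(x − m) + m`. -/
def phim (m : ℕ) (x : ℝ) : ℝ := phi0 (x - m) + m

/-- The plateau truncation `ρ_m`. -/
def rhom (m : ℕ) (x : ℝ) : ℝ :=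
  if -((m : ℝ) + 1) < x ∧ x < -(m : ℝ) then x + m + 1
  else if -(m : ℝ) ≤ x ∧ x ≤ (m : ℝ) then 1
  else if (m : ℝ) < x ∧ x ≤ (m : ℝ) + 1 then (m : ℝ) + 1 - x
  else 0

/-- `ν_m`: the restriction of `ν` to `ℝ \ [−1/m, 1/m]`. -/
def numeas (ν : Measure ℝ) (m : ℕ) : Measure ℝ :=
  ν.restrict (Set.Icc (-(1 / (m : ℝ))) (1 / (m : ℝ)))ᶜ

/-- The truncated no-signal part `f¹_m(z,u,p)` of the driver. -/
def f1m (ν : Measure ℝ) (η γ : ℝ → ℝ) (lam Cke : ℝ) (m : ℕ)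
    (z : ℝ) (u : ℝ → ℝ) (p : ℝ) : ℝ :=
  lam / 2 * (p - (z + Cke / lam)) ^ 2 * rhom m z
    + (∫ e in {e | γ e = 0}, hpen lam (phim m (u e - p * η e)) ∂(numeas ν m))
    - p * ∫ e in {e | γ e = 0}, η e ∂ν

/-- The truncated signal part `f²_m(g,u,p)` of the driver. -/
def f2m (η γ : ℝ → ℝ) (K : ℝ → Measure ℝ) (lam : ℝ) (m : ℕ)
    (g : ℝ) (u : ℝ → ℝ) (p : ℝ) : ℝ :=
  (∫ e in {e | γ e = g},
      (if 1 / (m : ℝ) < |e| then hpen lam (phim m (u e - p * η e)) else 0) ∂(K g))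
    - p * ∫ e in {e | γ e = g}, η e ∂(K g)

/-- The truncated driver `f_m(z,u)`. -/
def fm (ν μ : Measure ℝ) (η γ : ℝ → ℝ) (K : ℝ → Measure ℝ)
    (lam Cke pil pib : ℝ) (m : ℕ) (z : ℝ) (u : ℝ → ℝ) : ℝ :=
  (⨅ p : Set.Icc (-pil) pib, f1m ν η γ lam Cke m z u p)
    + (∫ g in ({0}ᶜ : Set ℝ), (⨅ p : Set.Icc (-pil) pib, f2m η γ K lam m g u p) ∂μ)
    - Cke * z - Cke ^ 2 / (2 * lam)

/-!
On a big jump `|e| > 1/m` the function `x ↦ h_λ(φ_m(x))` has slope at most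
`e^{λ(m+π/2)} − 1`, because `φ_m` is monotone, 1-Lipschitz and bounded by `m + π/2`, and slope
at least `e^{−λR} − 1` on `[−R, ∞)`. So `k_m(u,u')(e)` is the upper slope where
`u(e) ≥ u'(e)` and the lower slope with `R = |u(e)| + max(π̲, π̄) C₀` where `u(e) < u'(e)`;
this bounds the difference of the integrands of `f¹_m` and `f²_m` pointwise, uniformly in the
control `p`, and a difference of infima over `p` is at most the supremum of the differences.
The signal part is integrated against `μ` and recombined with the no-signal part through the
disintegration `ν|_{γ≠0} = K ∘ μ|_{ℝ∖{0}}`. The one delicate point is the measurability of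
`g ↦ inf_p f²_m(g,u,p)`: for a.e. `g` it is continuous in `p`, so the infimum can be taken over
a countable dense set of controls.
-/

open Real ProbabilityTheory

lemma hpen_nonneg {lam : ℝ} (hlam : 0 < lam) (x : ℝ) : 0 ≤ hpen lam x :=
  div_nonneg (by linarith [add_one_le_exp (lam * x)]) hlam.le

lemma hpen_sub_le {lam s t : ℝ} (hlam : 0 < lam) :
    hpen lam s - hpen lam t ≤ (exp (lam * s) - 1) * (s - t) := by
  have hexp : exp (lam * t) = exp (lam * s) * exp (-(lam * (s - t))) := by
    rw [← exp_add]; ring_nf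
  have := add_one_le_exp (-(lam * (s - t)))
  have := exp_pos (lam * s)
  rw [hpen, hpen, div_sub_div_same, div_le_iff₀ hlam, hexp]
  nlinarith

lemma le_hpen_sub {lam s t : ℝ} (hlam : 0 < lam) :
    (exp (lam * t) - 1) * (s - t) ≤ hpen lam s - hpen lam t := by
  have hexp : exp (lam * s) = exp (lam * t) * exp (lam * (s - t)) := by
    rw [← exp_add]; ring_nf
  have := add_one_le_exp (lam * (s - t))
  have := exp_pos (lam * t)
  rw [hpen, hpen, div_sub_div_same, le_div_iff₀ hlam, hexp]
  nlinarith

lemma arctan_sub_arctan_le {x y : ℝ} (hxy : x ≤ y) : arctan y - arctan x ≤ y - x := by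
  have hmono : Monotone fun x : ℝ => x - arctan x := by
    refine monotone_of_deriv_nonneg (differentiable_id.sub differentiable_arctan) fun x => ?_
    have hd : HasDerivAt (fun x : ℝ => x - arctan x) (1 - 1 / (1 + x ^ 2)) x :=
      (hasDerivAt_id' x).sub (hasDerivAt_arctan x)
    rw [hd.deriv, sub_nonneg]
    exact div_le_one_of_le₀ (by nlinarith) (by positivity)
  linarith [hmono hxy]

lemma phi0_eq (x : ℝ) : phi0 x = arctan (max x 0) + min x 0 := by
  rcases lt_or_ge 0 x with hx | hx
  · simp [phi0, hx, hx.le]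
  · simp [phi0, not_lt.2 hx, hx]

lemma continuous_phi0 : Continuous phi0 := by
  simp only [funext phi0_eq]
  fun_prop

lemma phi0_sub_le {x y : ℝ} (hxy : x ≤ y) : phi0 y - phi0 x ≤ y - x := by
  have := arctan_sub_arctan_le (max_le_max_right 0 hxy)
  rw [phi0_eq, phi0_eq]
  linarith [max_add_min x 0, max_add_min y 0]

lemma phi0_mono : Monotone phi0 := fun x y hxy => by
  rw [phi0_eq, phi0_eq]
  exact add_le_add (arctan_mono (max_le_max_right 0 hxy)) (min_le_min_right 0 hxy)

lemma phi0_le_pi_div_two (x : ℝ) : phi0 x ≤ π / 2 := by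
  rw [phi0_eq]
  linarith [arctan_lt_pi_div_two (max x 0), min_le_right x 0]

lemma min_le_phi0 (x : ℝ) : min x 0 ≤ phi0 x := by
  rw [phi0_eq]
  linarith [arctan_nonneg.2 (le_max_right x 0)]

lemma continuous_phim (m : ℕ) : Continuous (phim m) :=
  (continuous_phi0.comp (continuous_sub_right _)).add continuous_const

lemma phim_mono (m : ℕ) : Monotone (phim m) := fun _ _ hxy =>
  add_le_add_left (phi0_mono (sub_le_sub_right hxy _)) _

lemma phim_sub_le (m : ℕ) {x y : ℝ} (hxy : x ≤ y) : phim m y - phim m x ≤ y - x := by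
  have := phi0_sub_le (sub_le_sub_right hxy (m : ℝ))
  simp only [phim]
  linarith

lemma phim_le (m : ℕ) (x : ℝ) : phim m x ≤ m + π / 2 := by
  simp only [phim]; linarith [phi0_le_pi_div_two (x - m)]

lemma min_le_phim (m : ℕ) (x : ℝ) : min x m ≤ phim m x :=
  calc min x m = min (x - m) 0 + m := by rw [← min_add_add_right]; simp
    _ ≤ phim m x := by simp only [phim]; linarith [min_le_phi0 (x - m)]

lemma continuous_hpen (lam : ℝ) : Continuous (hpen lam) := by
  unfold hpen; fun_prop

def hpenm (lam : ℝ) (m : ℕ) (x : ℝ) : ℝ := hpen lam (phim m x)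

lemma continuous_hpenm (lam : ℝ) (m : ℕ) : Continuous (hpenm lam m) :=
  (continuous_hpen lam).comp (continuous_phim m)

lemma exists_hpenm_le (lam : ℝ) (m : ℕ) (B : ℝ) :
    ∃ C, ∀ x, -B ≤ x → |hpenm lam m x| ≤ C := by
  obtain ⟨C, hC⟩ :=
    (isCompact_Icc (a := min (-B) m) (b := m + π / 2)).exists_bound_of_continuousOn
      (continuous_hpen lam).continuousOn
  refine ⟨C, fun x hx => hC _ ⟨?_, phim_le m x⟩⟩
  exact (min_le_min_right _ hx).trans (min_le_phim m x)

lemma hpenm_sub_le {lam : ℝ} (hlam : 0 < lam) (m : ℕ) {a b : ℝ} (hba : b ≤ a) :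
    hpenm lam m a - hpenm lam m b ≤ (exp (lam * (m + π / 2)) - 1) * (a - b) := by
  have hts := phim_mono m hba
  have hst := phim_sub_le m hba
  have hexp : exp (lam * phim m a) ≤ exp (lam * (m + π / 2)) :=
    exp_le_exp.2 (mul_le_mul_of_nonneg_left (phim_le m a) hlam.le)
  have h1 : (1 : ℝ) ≤ exp (lam * (m + π / 2)) := one_le_exp (by positivity)
  have := hpen_sub_le (s := phim m a) (t := phim m b) hlam
  unfold hpenm
  rcases le_total (exp (lam * phim m a)) 1 with h | h <;> nlinarith

lemma le_hpenm_sub {lam R : ℝ} (hlam : 0 < lam) (m : ℕ) (hR : 0 ≤ R) {a b : ℝ}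
    (hba : b ≤ a) (hb : -R ≤ b) :
    (exp (-(lam * R)) - 1) * (a - b) ≤ hpenm lam m a - hpenm lam m b := by
  have hts := phim_mono m hba
  have hst := phim_sub_le m hba
  have hRt : -R ≤ phim m b :=
    le_trans (le_min hb (by linarith [(m.cast_nonneg : (0 : ℝ) ≤ m)])) (min_le_phim m b)
  have hexp : exp (-(lam * R)) ≤ exp (lam * phim m b) := exp_le_exp.2 (by nlinarith)
  have h1 : exp (-(lam * R)) ≤ 1 := exp_le_one_iff.2 (by nlinarith)
  have := le_hpen_sub (s := phim m a) (t := phim m b) hlam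
  unfold hpenm
  rcases le_total (exp (lam * phim m b)) 1 with h | h <;> nlinarith

def comparisonSlope (lam c : ℝ) (m : ℕ) (x y : ℝ) : ℝ :=
  if x < y then exp (-(lam * (|x| + c))) - 1 else exp (lam * (m + π / 2)) - 1

lemma hpenm_sub_le_comparisonSlope {lam c d : ℝ} (hlam : 0 < lam) (m : ℕ) (hd : |d| ≤ c)
    (x y : ℝ) :
    hpenm lam m (x - d) - hpenm lam m (y - d) ≤ comparisonSlope lam c m x y * (x - y) := by
  unfold comparisonSlope
  split_ifs with hxy
  · have := le_hpenm_sub hlam m (by linarith [abs_nonneg x, abs_nonneg d] : 0 ≤ |x| + c)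
      (a := y - d) (b := x - d) (by linarith) (by linarith [neg_abs_le x, le_abs_self d])
    nlinarith
  · have := hpenm_sub_le hlam m (a := x - d) (b := y - d) (by linarith)
    nlinarith

lemma comparisonSlope_le {lam c : ℝ} (hlam : 0 < lam) (hc : 0 ≤ c) (m : ℕ) (x y : ℝ) :
    comparisonSlope lam c m x y ≤ exp (lam * (m + π / 2)) - 1 := by
  unfold comparisonSlope
  split_ifs
  · have : -(lam * (|x| + c)) ≤ lam * (m + π / 2) := by
      have : 0 ≤ lam * (|x| + c) := by positivity
      have : 0 ≤ lam * (m + π / 2) := by positivity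
      linarith
    linarith [exp_le_exp.2 this]
  · exact le_rfl

lemma le_comparisonSlope {lam c M : ℝ} (hlam : 0 < lam) (hc : 0 ≤ c) (m : ℕ) {x : ℝ}
    (hx : |x| ≤ M) (y : ℝ) :
    exp (-(lam * (M + c))) - 1 ≤ comparisonSlope lam c m x y := by
  unfold comparisonSlope
  split_ifs
  · linarith [exp_le_exp.2 (show -(lam * (M + c)) ≤ -(lam * (|x| + c)) by nlinarith)]
  · have : exp (-(lam * (M + c))) ≤ 1 :=
      exp_le_one_iff.2 (by nlinarith [abs_nonneg x])
    linarith [one_le_exp (by positivity : 0 ≤ lam * (m + π / 2))]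

def bigJumps (m : ℕ) : Set ℝ := {e | 1 / (m : ℝ) < |e|}

lemma measurableSet_bigJumps (m : ℕ) : MeasurableSet (bigJumps m) :=
  measurableSet_lt measurable_const measurable_abs

lemma compl_Icc_eq_bigJumps (m : ℕ) :
    (Icc (-(1 / (m : ℝ))) (1 / (m : ℝ)))ᶜ = bigJumps m := by
  ext e
  simp [bigJumps, ← abs_le]

lemma measure_bigJumps_lt_top {ν : Measure ℝ}
    (hν : ∫⁻ e, ENNReal.ofReal (min 1 (e ^ 2)) ∂ν < ⊤) {m : ℕ} (hm : 1 ≤ m) :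
    ν (bigJumps m) < ⊤ := by
  set c : ℝ := min 1 ((1 / (m : ℝ)) ^ 2)
  have hc : 0 < c := by positivity
  have hmarkov := mul_meas_ge_le_lintegral₀ (μ := ν)
    (by fun_prop : AEMeasurable (fun e : ℝ => ENNReal.ofReal (min 1 (e ^ 2))) ν)
    (ENNReal.ofReal c)
  have hsub : bigJumps m ⊆ {e | ENNReal.ofReal c ≤ ENNReal.ofReal (min 1 (e ^ 2))} := by
    intro e he
    have : (1 / (m : ℝ)) ^ 2 ≤ e ^ 2 := by
      rw [← sq_abs e]; exact pow_le_pow_left₀ (by positivity) (le_of_lt he) 2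
    exact ENNReal.ofReal_le_ofReal (min_le_min_left 1 this)
  have : ENNReal.ofReal c * ν (bigJumps m) < ⊤ :=
    ((mul_le_mul' le_rfl (measure_mono hsub)).trans hmarkov).trans_lt hν
  exact ENNReal.lt_top_of_mul_ne_top_right this.ne (by simp [hc])

def penIntegrand (lam : ℝ) (m : ℕ) (η w : ℝ → ℝ) (p e : ℝ) : ℝ :=
  if 1 / (m : ℝ) < |e| then hpenm lam m (w e - p * η e) else 0

def comparisonKernel (lam c : ℝ) (m : ℕ) (u u' : ℝ → ℝ) (e : ℝ) : ℝ :=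
  if 1 / (m : ℝ) < |e| then comparisonSlope lam c m (u e) (u' e) else 0

lemma measurable_penIntegrand (lam : ℝ) (m : ℕ) {η w : ℝ → ℝ} (hη : Measurable η)
    (hw : Measurable w) (p : ℝ) : Measurable (penIntegrand lam m η w p) :=
  Measurable.ite (measurableSet_bigJumps m)
    ((continuous_hpenm lam m).measurable.comp (by fun_prop)) measurable_const

lemma measurable_comparisonKernel (lam c : ℝ) (m : ℕ) {u u' : ℝ → ℝ} (hu : Measurable u)
    (hu' : Measurable u') : Measurable (comparisonKernel lam c m u u') :=
  Measurable.ite (measurableSet_bigJumps m)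
    (Measurable.ite (measurableSet_lt hu hu') (by fun_prop) measurable_const) measurable_const

lemma penIntegrand_nonneg {lam : ℝ} (hlam : 0 < lam) (m : ℕ) (η w : ℝ → ℝ) (p e : ℝ) :
    0 ≤ penIntegrand lam m η w p e := by
  unfold penIntegrand
  split_ifs
  exacts [hpen_nonneg hlam _, le_rfl]

lemma exists_abs_penIntegrand_le (lam : ℝ) (m : ℕ) (M c : ℝ) :
    ∃ C, ∀ (η w : ℝ → ℝ) (p e : ℝ), |w e| ≤ M → |p * η e| ≤ c →
      |penIntegrand lam m η w p e| ≤ C := by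
  obtain ⟨C, hC⟩ := exists_hpenm_le lam m (M + c)
  refine ⟨C, fun η w p e hw hpη => ?_⟩
  unfold penIntegrand
  split_ifs
  · exact hC _ (by linarith [neg_abs_le (w e), le_abs_self (p * η e)])
  · rw [abs_zero]
    exact (abs_nonneg _).trans (hC |M + c| (by linarith [neg_abs_le (M + c)]))

lemma penIntegrand_sub_le_comparisonKernel {lam c : ℝ} (hlam : 0 < lam) (m : ℕ)
    {η u u' : ℝ → ℝ} {p e : ℝ} (hpη : |p * η e| ≤ c) :
    penIntegrand lam m η u p e - penIntegrand lam m η u' p e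
      ≤ comparisonKernel lam c m u u' e * (u e - u' e) := by
  unfold penIntegrand comparisonKernel
  split_ifs
  · exact hpenm_sub_le_comparisonSlope hlam m hpη (u e) (u' e)
  · simp

lemma abs_comparisonKernel_le {lam c : ℝ} (hlam : 0 < lam) (hc : 0 ≤ c) (m : ℕ)
    (u u' : ℝ → ℝ) (e : ℝ) : |comparisonKernel lam c m u u' e| ≤ exp (lam * (m + π / 2)) := by
  unfold comparisonKernel
  split_ifs
  · refine abs_le.2 ⟨?_, by linarith [comparisonSlope_le hlam hc m (u e) (u' e)]⟩
    have := le_comparisonSlope hlam hc m (le_refl |u e|) (u' e)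
    linarith [exp_pos (-(lam * (|u e| + c))), one_le_exp (by positivity : 0 ≤ lam * (m + π / 2))]
  · simp [(exp_pos _).le]

lemma abs_penIntegrand_le_indicator {lam : ℝ} {m : ℕ} {η w : ℝ → ℝ} {p e C : ℝ}
    (hC : |penIntegrand lam m η w p e| ≤ C) :
    |penIntegrand lam m η w p e| ≤ (bigJumps m).indicator (fun _ => C) e := by
  by_cases he : e ∈ bigJumps m
  · rwa [Set.indicator_of_mem he]
  · have : penIntegrand lam m η w p e = 0 := if_neg he
    rw [this, Set.indicator_of_notMem he, abs_zero]

lemma integrable_of_abs_le_on_of_eq_zero {α : Type*} [MeasurableSpace α] {ρ : Measure α}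
    {s : Set α} (hs : MeasurableSet s) (hρs : ρ s ≠ ⊤) {f : α → ℝ}
    (hf : AEStronglyMeasurable f ρ) {C : ℝ} (hC : ∀ x ∈ s, |f x| ≤ C) (h0 : ∀ x ∉ s, f x = 0) :
    Integrable f ρ :=
  (Measure.integrableOn_of_bounded hρs hf
    (ae_restrict_of_forall_mem hs hC)).integrable_of_forall_notMem_eq_zero h0

def penDriver (ρ : Measure ℝ) (lam : ℝ) (m : ℕ) (η w : ℝ → ℝ) (p : ℝ) : ℝ :=
  ∫ e, penIntegrand lam m η w p e ∂ρ - p * ∫ e, η e ∂ρ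

section penDriver

variable {ρ : Measure ℝ} {lam c M : ℝ} {m : ℕ} {η w u u' : ℝ → ℝ}

lemma integrable_penIntegrand (hρ : ρ (bigJumps m) ≠ ⊤) (hη : Measurable η) (hw : Measurable w)
    (hwM : ∀ e, |w e| ≤ M) {p : ℝ} (hpη : ∀ e, |p * η e| ≤ c) :
    Integrable (penIntegrand lam m η w p) ρ := by
  obtain ⟨C, hC⟩ := exists_abs_penIntegrand_le lam m M c
  exact integrable_of_abs_le_on_of_eq_zero (measurableSet_bigJumps m) hρ
    (measurable_penIntegrand lam m hη hw p).aestronglyMeasurable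
    (fun e _ => hC η w p e (hwM e) (hpη e)) fun _ he => if_neg he

lemma integrable_comparisonKernel_mul (hlam : 0 < lam) (hc : 0 ≤ c) (hρ : ρ (bigJumps m) ≠ ⊤)
    (hu : Measurable u) (hu' : Measurable u') (huM : ∀ e, |u e| ≤ M) (hu'M : ∀ e, |u' e| ≤ M) :
    Integrable (fun e => comparisonKernel lam c m u u' e * (u e - u' e)) ρ := by
  refine integrable_of_abs_le_on_of_eq_zero (measurableSet_bigJumps m) hρ
    ((measurable_comparisonKernel lam c m hu hu').mul (hu.sub hu')).aestronglyMeasurable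
    (C := exp (lam * (m + π / 2)) * (M + M)) (fun e _ => ?_) fun e he => ?_
  · rw [abs_mul]
    exact mul_le_mul (abs_comparisonKernel_le hlam hc m u u' e)
      ((abs_sub _ _).trans (add_le_add (huM e) (hu'M e))) (abs_nonneg _) (exp_pos _).le
  · have : comparisonKernel lam c m u u' e = 0 := if_neg he
    rw [this, zero_mul]

lemma penDriver_sub_le (hlam : 0 < lam) (hρ : ρ (bigJumps m) ≠ ⊤) (hη : Measurable η)
    (hu : Measurable u) (hu' : Measurable u') (huM : ∀ e, |u e| ≤ M) (hu'M : ∀ e, |u' e| ≤ M)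
    {p : ℝ} (hpη : ∀ e, |p * η e| ≤ c) :
    penDriver ρ lam m η u p - penDriver ρ lam m η u' p
      ≤ ∫ e, comparisonKernel lam c m u u' e * (u e - u' e) ∂ρ := by
  have hiu := integrable_penIntegrand (lam := lam) hρ hη hu huM hpη
  have hiu' := integrable_penIntegrand (lam := lam) hρ hη hu' hu'M hpη
  calc _ = ∫ e, (penIntegrand lam m η u p e - penIntegrand lam m η u' p e) ∂ρ := by
        rw [integral_sub hiu hiu']; unfold penDriver; ring
    _ ≤ _ := integral_mono (hiu.sub hiu')
        (integrable_comparisonKernel_mul hlam ((abs_nonneg _).trans (hpη 0)) hρ hu hu' huM hu'M)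
        fun e => penIntegrand_sub_le_comparisonKernel hlam m (hpη e)

lemma neg_le_penDriver (hlam : 0 < lam) (w : ℝ → ℝ) (p : ℝ) :
    -(|p| * ∫ e, |η e| ∂ρ) ≤ penDriver ρ lam m η w p := by
  have h1 : 0 ≤ ∫ e, penIntegrand lam m η w p e ∂ρ :=
    integral_nonneg fun e => penIntegrand_nonneg hlam m η w p e
  have h2 : p * ∫ e, η e ∂ρ ≤ |p| * ∫ e, |η e| ∂ρ := by
    refine (le_abs_self _).trans ?_
    rw [abs_mul]
    exact mul_le_mul_of_nonneg_left (abs_integral_le_integral_abs) (abs_nonneg p)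
  unfold penDriver
  linarith

lemma abs_penDriver_le (hρ : ρ (bigJumps m) ≠ ⊤) (hηi : Integrable η ρ) (hη : Measurable η)
    (hw : Measurable w) {C P p : ℝ} (hC : ∀ e, |penIntegrand lam m η w p e| ≤ C) (hp : |p| ≤ P) :
    |penDriver ρ lam m η w p| ≤ ∫ e, ((bigJumps m).indicator (fun _ => C) e + P * |η e|) ∂ρ := by
  have hF : Integrable (penIntegrand lam m η w p) ρ :=
    integrable_of_abs_le_on_of_eq_zero (measurableSet_bigJumps m) hρ
      (measurable_penIntegrand lam m hη hw p).aestronglyMeasurable (fun e _ => hC e)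
      fun _ he => if_neg he
  have hbound : Integrable (fun e => (bigJumps m).indicator (fun _ => C) e + P * |η e|) ρ :=
    ((integrable_indicator_iff (measurableSet_bigJumps m)).2 (integrableOn_const hρ)).add
      (hηi.abs.const_mul P)
  have hpoint : ∀ e, |penIntegrand lam m η w p e - p * η e|
      ≤ (bigJumps m).indicator (fun _ => C) e + P * |η e| := by
    intro e
    calc _ ≤ |penIntegrand lam m η w p e| + |p| * |η e| := by rw [← abs_mul]; exact abs_sub _ _
      _ ≤ _ := add_le_add (abs_penIntegrand_le_indicator (hC e))
          (mul_le_mul_of_nonneg_right hp (abs_nonneg _))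
  calc |penDriver ρ lam m η w p| = |∫ e, (penIntegrand lam m η w p e - p * η e) ∂ρ| := by
        rw [integral_sub hF (hηi.const_mul p), integral_const_mul, penDriver]
    _ ≤ ∫ e, |penIntegrand lam m η w p e - p * η e| ∂ρ := abs_integral_le_integral_abs
    _ ≤ _ := integral_mono (hF.sub (hηi.const_mul p)).abs hbound hpoint

lemma continuousOn_penDriver {s : Set ℝ} (hρ : ρ (bigJumps m) ≠ ⊤) (hη : Measurable η)
    (hw : Measurable w) (hwM : ∀ e, |w e| ≤ M) (hpη : ∀ p ∈ s, ∀ e, |p * η e| ≤ c) :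
    ContinuousOn (penDriver ρ lam m η w) s := by
  obtain ⟨C, hC⟩ := exists_abs_penIntegrand_le lam m M c
  have hint : ContinuousOn (fun p => ∫ e, penIntegrand lam m η w p e ∂ρ) s := by
    refine continuousOn_of_dominated (bound := (bigJumps m).indicator fun _ => C)
      (fun p _ => (measurable_penIntegrand lam m hη hw p).aestronglyMeasurable)
      (fun p hp => ae_of_all _ fun e =>
        abs_penIntegrand_le_indicator (hC η w p e (hwM e) (hpη p hp e)))
      ((integrable_indicator_iff (measurableSet_bigJumps m)).2 (integrableOn_const hρ))
      (ae_of_all _ fun e => ?_)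
    unfold penIntegrand
    split_ifs
    · exact ((continuous_hpenm lam m).comp (by fun_prop)).continuousOn
    · exact continuousOn_const
  exact hint.sub (continuousOn_id.mul continuousOn_const)

lemma ciInf_sub_ciInf_le {ι : Type*} [Nonempty ι] {f g : ι → ℝ} {c : ℝ}
    (hf : BddBelow (range f)) (h : ∀ i, f i - g i ≤ c) : (⨅ i, f i) - ⨅ i, g i ≤ c := by
  have : (⨅ i, f i) - c ≤ ⨅ i, g i := le_ciInf fun i => by linarith [ciInf_le hf i, h i]
  linarith

lemma iInf_add_penDriver_sub_le {s : Set ℝ} [Nonempty s] (hs : Bornology.IsBounded s)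
    {q : ℝ → ℝ} (hq : ∀ p, 0 ≤ q p) (hlam : 0 < lam) (hρ : ρ (bigJumps m) ≠ ⊤)
    (hη : Measurable η) (hu : Measurable u) (hu' : Measurable u') (huM : ∀ e, |u e| ≤ M)
    (hu'M : ∀ e, |u' e| ≤ M) (hpη : ∀ p ∈ s, ∀ e, |p * η e| ≤ c) :
    (⨅ p : s, (q p + penDriver ρ lam m η u p)) - ⨅ p : s, (q p + penDriver ρ lam m η u' p)
      ≤ ∫ e, comparisonKernel lam c m u u' e * (u e - u' e) ∂ρ := by
  obtain ⟨P, hP⟩ := isBounded_iff_forall_norm_le.1 hs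
  refine ciInf_sub_ciInf_le ⟨-(P * ∫ e, |η e| ∂ρ), ?_⟩ fun p => ?_
  · rintro _ ⟨p, rfl⟩
    have := mul_le_mul_of_nonneg_right (hP p p.2)
      (integral_nonneg (μ := ρ) fun e => abs_nonneg (η e))
    rw [Real.norm_eq_abs] at this
    linarith [neg_le_penDriver (ρ := ρ) (m := m) (η := η) hlam u p, hq p]
  · linarith [penDriver_sub_le hlam hρ hη hu hu' huM hu'M (hpη p p.2)]

end penDriver

lemma abs_ciInf_le {ι : Type*} [Nonempty ι] {f : ι → ℝ} {B : ℝ} (h : ∀ i, |f i| ≤ B) :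
    |⨅ i, f i| ≤ B := by
  have hbdd : BddBelow (range f) := ⟨-B, by rintro _ ⟨i, rfl⟩; exact (abs_le.1 (h i)).1⟩
  exact abs_le.2 ⟨le_ciInf fun i => (abs_le.1 (h i)).1,
    (ciInf_le hbdd (Classical.arbitrary ι)).trans (abs_le.1 (h _)).2⟩

section kernel

variable {α β : Type*} [MeasurableSpace α] [MeasurableSpace β] {κ : Kernel α β} {μ : Measure α}

lemma integral_comp_eq_integral_integral {f : β → ℝ} (hf : Integrable f (κ ∘ₘ μ)) :
    ∫ y, f y ∂(κ ∘ₘ μ) = ∫ x, ∫ y, f y ∂κ x ∂μ := by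
  rw [Measure.comp_eq_comp_const_apply] at hf ⊢
  simpa using Kernel.integral_comp hf

lemma integrable_integral_of_integrable_comp {f : β → ℝ} (hf : Integrable f (κ ∘ₘ μ)) :
    Integrable (fun x => ∫ y, f y ∂κ x) μ := by
  rw [Measure.comp_eq_comp_const_apply] at hf
  simpa using hf.integral_comp

lemma ae_ne_top_of_comp {s : Set β} (hs : MeasurableSet s) (h : (κ ∘ₘ μ) s ≠ ⊤) :
    ∀ᵐ x ∂μ, κ x s ≠ ⊤ := by
  rw [Measure.bind_apply hs κ.aemeasurable] at h
  exact (ae_lt_top (κ.measurable_coe hs) h).mono fun _ hx => hx.ne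

end kernel

section signal

variable {α : Type*} [MeasurableSpace α] {κ : Kernel α ℝ} {μ : Measure α}
  {lam c M : ℝ} {m : ℕ} {η w u u' : ℝ → ℝ} {s : Set ℝ}

lemma aestronglyMeasurable_iInf_penDriver (hS : ∀ᵐ x ∂μ, κ x (bigJumps m) ≠ ⊤)
    (hη : Measurable η) (hw : Measurable w) (hwM : ∀ e, |w e| ≤ M)
    (hpη : ∀ p ∈ s, ∀ e, |p * η e| ≤ c) :
    AEStronglyMeasurable (fun x => ⨅ p : s, penDriver (κ x) lam m η w p) μ := by
  obtain ⟨D, hDc, hD⟩ := TopologicalSpace.exists_countable_dense s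
  have := hDc.to_subtype
  have hmeas : ∀ p, Measurable fun x => penDriver (κ x) lam m η w p := fun p =>
    (measurable_penIntegrand lam m hη hw p).stronglyMeasurable.integral_kernel.measurable.sub
      (measurable_const.mul hη.stronglyMeasurable.integral_kernel.measurable)
  refine (Measurable.iInf fun d : D => hmeas d).aestronglyMeasurable.congr ?_
  filter_upwards [hS] with x hx
  exact hD.ciInf' (continuousOn_penDriver hx hη hw hwM hpη).domRestrict

lemma integrable_iInf_penDriver [Nonempty s] (hs : Bornology.IsBounded s)
    (hS : (κ ∘ₘ μ) (bigJumps m) ≠ ⊤) (hηi : Integrable η (κ ∘ₘ μ)) (hη : Measurable η)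
    (hw : Measurable w) (hwM : ∀ e, |w e| ≤ M) (hpη : ∀ p ∈ s, ∀ e, |p * η e| ≤ c) :
    Integrable (fun x => ⨅ p : s, penDriver (κ x) lam m η w p) μ := by
  obtain ⟨P, hP⟩ := isBounded_iff_forall_norm_le.1 hs
  obtain ⟨C, hC⟩ := exists_abs_penIntegrand_le lam m M c
  have hbound : Integrable (fun e => (bigJumps m).indicator (fun _ => C) e + P * |η e|) (κ ∘ₘ μ) :=
    ((integrable_indicator_iff (measurableSet_bigJumps m)).2 (integrableOn_const hS)).add
      (hηi.abs.const_mul P)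
  have hSae := ae_ne_top_of_comp (measurableSet_bigJumps m) hS
  refine (integrable_integral_of_integrable_comp hbound).mono'
    (aestronglyMeasurable_iInf_penDriver hSae hη hw hwM hpη) ?_
  filter_upwards [hSae, ((Measure.integrable_comp_iff hηi.1).1 hηi).1] with x hx hηx
  rw [Real.norm_eq_abs]
  exact abs_ciInf_le fun p => abs_penDriver_le hx hηx hη hw
    (fun e => hC η w p e (hwM e) (hpη p p.2 e)) (by simpa using hP p p.2)

lemma integral_iInf_penDriver_sub_le [Nonempty s] (hs : Bornology.IsBounded s) (hlam : 0 < lam)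
    (hS : (κ ∘ₘ μ) (bigJumps m) ≠ ⊤) (hηi : Integrable η (κ ∘ₘ μ)) (hη : Measurable η)
    (hu : Measurable u) (hu' : Measurable u') (huM : ∀ e, |u e| ≤ M) (hu'M : ∀ e, |u' e| ≤ M)
    (hpη : ∀ p ∈ s, ∀ e, |p * η e| ≤ c) :
    ∫ x, (⨅ p : s, penDriver (κ x) lam m η u p) ∂μ - ∫ x, (⨅ p : s, penDriver (κ x) lam m η u' p) ∂μ
      ≤ ∫ e, comparisonKernel lam c m u u' e * (u e - u' e) ∂(κ ∘ₘ μ) := by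
  obtain ⟨p₀, hp₀⟩ := ‹Nonempty s›
  have hZ := integrable_comparisonKernel_mul hlam ((abs_nonneg _).trans (hpη p₀ hp₀ 0)) hS
    hu hu' huM hu'M
  have hIu := integrable_iInf_penDriver (lam := lam) hs hS hηi hη hu huM hpη
  have hIu' := integrable_iInf_penDriver (lam := lam) hs hS hηi hη hu' hu'M hpη
  rw [← integral_sub hIu hIu', integral_comp_eq_integral_integral hZ]
  refine integral_mono_ae (hIu.sub hIu') (integrable_integral_of_integrable_comp hZ) ?_
  filter_upwards [ae_ne_top_of_comp (measurableSet_bigJumps m) hS] with x hx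
  simpa using iInf_add_penDriver_sub_le (q := fun _ => 0) hs (fun _ => le_rfl) hlam hx hη
    hu hu' huM hu'M hpη

end signal

lemma rhom_nonneg (m : ℕ) (x : ℝ) : 0 ≤ rhom m x := by
  unfold rhom
  split_ifs with h1 h2 h3
  · linarith [h1.1]
  · exact zero_le_one
  · linarith [h3.2]
  · exact le_rfl

lemma penIntegrand_eq_indicator (lam : ℝ) (m : ℕ) (η w : ℝ → ℝ) (p : ℝ) :
    penIntegrand lam m η w p = (bigJumps m).indicator fun e => hpenm lam m (w e - p * η e) := by
  ext e
  simp [Set.indicator_apply, penIntegrand, bigJumps]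

lemma f1m_eq (ν : Measure ℝ) (η γ : ℝ → ℝ) (lam Cke : ℝ) (m : ℕ) (z : ℝ) (u : ℝ → ℝ) (p : ℝ) :
    f1m ν η γ lam Cke m z u p = lam / 2 * (p - (z + Cke / lam)) ^ 2 * rhom m z
      + penDriver (ν.restrict {e | γ e = 0}) lam m η u p := by
  have hB := measurableSet_bigJumps m
  rw [f1m, penDriver, penIntegrand_eq_indicator, integral_indicator hB, numeas,
    compl_Icc_eq_bigJumps, Measure.restrict_restrict' hB, Measure.restrict_restrict hB,
    inter_comm]
  unfold hpenm
  ring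

lemma f2m_eq {η γ : ℝ → ℝ} {K : ℝ → Measure ℝ} {g : ℝ} (hK : (K g).restrict {e | γ e = g} = K g)
    (lam : ℝ) (m : ℕ) (w : ℝ → ℝ) (p : ℝ) :
    f2m η γ K lam m g w p = penDriver (K g) lam m η w p := by
  rw [f2m, hK]
  rfl

lemma comparisonKernel_bounds {lam c M : ℝ} (hlam : 0 < lam) (hc : 0 ≤ c) (m : ℕ)
    {u u' : ℝ → ℝ} {e : ℝ} (hu : |u e| ≤ M) :
    (-1 + exp (-(lam * (M + c)))) * (if 1 / (m : ℝ) < |e| then 1 else 0)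
        ≤ comparisonKernel lam c m u u' e ∧
      comparisonKernel lam c m u u' e
        ≤ (exp (lam * (m + π / 2)) - 1) * (if 1 / (m : ℝ) < |e| then 1 else 0) := by
  unfold comparisonKernel
  split_ifs
  · simp only [mul_one]
    exact ⟨by linarith [le_comparisonSlope hlam hc m hu (u' e)],
      comparisonSlope_le hlam hc m (u e) (u' e)⟩
  · simp

lemma abs_mul_le_max_mul {a b C p x : ℝ} (hp : p ∈ Icc (-a) b) (hx : |x| ≤ C) :
    |p * x| ≤ max a b * C := by
  rw [abs_mul]
  refine mul_le_mul (abs_le.2 ⟨?_, ?_⟩) hx (abs_nonneg _) ?_ <;>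
    linarith [le_max_left a b, le_max_right a b, hp.1, hp.2]

lemma comp_restrict_eq_restrict {α β : Type*} [MeasurableSpace α] [MeasurableSpace β]
    {κ : Kernel α β} {μ : Measure α} {ν : Measure β} {s : Set α} {t : Set β}
    (h : ∀ B, MeasurableSet B → ν (B ∩ t) = ∫⁻ x in s, κ x B ∂μ) :
    κ ∘ₘ μ.restrict s = ν.restrict t := by
  ext B hB
  rw [Measure.bind_apply hB κ.aemeasurable, Measure.restrict_apply hB, h B hB]

lemma fm_sub_fm (ν μ : Measure ℝ) (η γ : ℝ → ℝ) (K : ℝ → Measure ℝ) (lam Cke pil pib : ℝ)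
    (m : ℕ) (z : ℝ) (u u' : ℝ → ℝ) :
    fm ν μ η γ K lam Cke pil pib m z u - fm ν μ η γ K lam Cke pil pib m z u'
      = ((⨅ p : Icc (-pil) pib, f1m ν η γ lam Cke m z u p)
          - ⨅ p : Icc (-pil) pib, f1m ν η γ lam Cke m z u' p)
        + ((∫ g in {0}ᶜ, ⨅ p : Icc (-pil) pib, f2m η γ K lam m g u p ∂μ)
          - ∫ g in {0}ᶜ, ⨅ p : Icc (-pil) pib, f2m η γ K lam m g u' p ∂μ) := by
  unfold fm
  ring

section driverDifference

variable {ν μ : Measure ℝ} {η γ u u' : ℝ → ℝ} {K : ℝ → Measure ℝ} {lam Cke pil pib c M : ℝ}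
  {m : ℕ} [Nonempty (Icc (-pil) pib)]

lemma iInf_f1m_sub_le (hlam : 0 < lam) (hν : ν (bigJumps m) ≠ ⊤) (hη : Measurable η)
    (hu : Measurable u) (hu' : Measurable u') (huM : ∀ e, |u e| ≤ M) (hu'M : ∀ e, |u' e| ≤ M)
    (hpη : ∀ p ∈ Icc (-pil) pib, ∀ e, |p * η e| ≤ c) (z : ℝ) :
    (⨅ p : Icc (-pil) pib, f1m ν η γ lam Cke m z u p)
        - ⨅ p : Icc (-pil) pib, f1m ν η γ lam Cke m z u' p
      ≤ ∫ e in {e | γ e = 0}, comparisonKernel lam c m u u' e * (u e - u' e) ∂ν := by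
  simp only [f1m_eq]
  exact iInf_add_penDriver_sub_le (Metric.isBounded_Icc _ _)
    (q := fun p => lam / 2 * (p - (z + Cke / lam)) ^ 2 * rhom m z)
    (fun p => mul_nonneg (by positivity) (rhom_nonneg m z)) hlam
    (ne_top_of_le_ne_top hν (Measure.restrict_apply_le _ _)) hη hu hu' huM hu'M hpη

lemma integral_iInf_f2m_sub_le (hlam : 0 < lam) (hν : ν (bigJumps m) ≠ ⊤) (hγ : Measurable γ)
    (hη : Measurable η) (hηi : Integrable η ν) (hK : Measurable K)
    (hKprob : ∀ᵐ g ∂μ.restrict {0}ᶜ, K g univ = 1 ∧ K g {e | γ e = g} = 1)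
    (hdis : ∀ B, MeasurableSet B → ν (B ∩ {e | γ e ≠ 0}) = ∫⁻ g in {0}ᶜ, K g B ∂μ)
    (hu : Measurable u) (hu' : Measurable u') (huM : ∀ e, |u e| ≤ M) (hu'M : ∀ e, |u' e| ≤ M)
    (hpη : ∀ p ∈ Icc (-pil) pib, ∀ e, |p * η e| ≤ c) :
    (∫ g in {0}ᶜ, ⨅ p : Icc (-pil) pib, f2m η γ K lam m g u p ∂μ)
        - ∫ g in {0}ᶜ, ⨅ p : Icc (-pil) pib, f2m η γ K lam m g u' p ∂μ
      ≤ ∫ e in {e | γ e ≠ 0}, comparisonKernel lam c m u u' e * (u e - u' e) ∂ν := by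
  let κ : Kernel ℝ ℝ := ⟨K, hK⟩
  have hcomp : κ ∘ₘ μ.restrict {0}ᶜ = ν.restrict {e | γ e ≠ 0} := comp_restrict_eq_restrict hdis
  have hf2 : ∀ᵐ g ∂μ.restrict {0}ᶜ, ∀ w, (⨅ p : Icc (-pil) pib, f2m η γ K lam m g w p)
      = ⨅ p : Icc (-pil) pib, penDriver (κ g) lam m η w p := by
    filter_upwards [hKprob] with g ⟨hKuniv, hKγ⟩ w
    have : IsProbabilityMeasure (K g) := ⟨hKuniv⟩
    have hγg : MeasurableSet {e | γ e = g} := hγ (measurableSet_singleton g)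
    simp only [f2m_eq (Measure.restrict_eq_self_of_ae_mem
      ((ae_iff_measure_eq hγg.nullMeasurableSet).2 (hKγ.trans hKuniv.symm)))]
    rfl
  rw [integral_congr_ae (hf2.mono fun _ h => h u), integral_congr_ae (hf2.mono fun _ h => h u'),
    ← hcomp]
  exact integral_iInf_penDriver_sub_le (Metric.isBounded_Icc _ _) hlam
    (hcomp ▸ ne_top_of_le_ne_top hν (Measure.restrict_apply_le _ _)) (hcomp ▸ hηi.restrict)
    hη hu hu' huM hu'M hpη

end driverDifference

theorem fm_comparison_structure_general
    (ν : Measure ℝ)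
    (hν2 : (∫⁻ e, ENNReal.ofReal (min 1 (e ^ 2)) ∂ν) < ⊤)
    (η γ : ℝ → ℝ) (hηmeas : Measurable η) (hγmeas : Measurable γ)
    (C₀ : ℝ) (hC₀ : 0 < C₀)
    (hηb : ∀ e, |η e| ≤ C₀ * min 1 |e|)
    (hηint : Integrable η ν)
    (μ : Measure ℝ)
    (K : ℝ → Measure ℝ) (hKmeas : Measurable K)
    (hKprob : ∀ᵐ g ∂μ.restrict ({0}ᶜ : Set ℝ),
      K g Set.univ = 1 ∧ K g {e | γ e = g} = 1)
    (hdis : ∀ B : Set ℝ, MeasurableSet B →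
      ν (B ∩ {e | γ e ≠ 0}) = ∫⁻ g in ({0}ᶜ : Set ℝ), K g B ∂μ)
    (lam pil pib : ℝ) (hlam : 0 < lam) (hpil : 0 < pil) (hpib : 0 < pib)
    (Cke : ℝ)
    (m : ℕ) (hm : 1 ≤ m) :
    ∃ k : (ℝ → ℝ) → (ℝ → ℝ) → ℝ → ℝ,
      (∀ u u' : ℝ → ℝ, Measurable u → Measurable u' →
        (∃ M : ℝ, ∀ e, |u e| ≤ M) → (∃ M : ℝ, ∀ e, |u' e| ≤ M) →
        Integrable (fun e => (u e) ^ 2) ν → Integrable (fun e => (u' e) ^ 2) ν →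
        Measurable (k u u') ∧
        ∀ z : ℝ,
          fm ν μ η γ K lam Cke pil pib m z u - fm ν μ η γ K lam Cke pil pib m z u'
            ≤ ∫ e, k u u' e * (u e - u' e) ∂ν) ∧
      (∀ M : ℝ, 0 < M →
        ∃ Cl Cu : ℝ, 0 < Cl ∧ 0 < Cu ∧
          ∀ u u' : ℝ → ℝ, Measurable u → Measurable u' →
            Integrable (fun e => (u e) ^ 2) ν → Integrable (fun e => (u' e) ^ 2) ν →
            (∀ e, |u e| ≤ M) → (∀ e, |u' e| ≤ M) →
            ∀ e : ℝ,
              (-1 + Cl) * (if 1 / (m : ℝ) < |e| then 1 else 0) ≤ k u u' e ∧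
              k u u' e ≤ Cu * (if 1 / (m : ℝ) < |e| then 1 else 0)) := by
  have : Nonempty (Icc (-pil) pib) := ⟨0, by linarith, by linarith⟩
  have hνS := (measure_bigJumps_lt_top hν2 hm).ne
  have hpη : ∀ p ∈ Icc (-pil) pib, ∀ e, |p * η e| ≤ max pil pib * C₀ := fun p hp e =>
    abs_mul_le_max_mul hp ((hηb e).trans (mul_le_of_le_one_right hC₀.le (min_le_left _ _)))
  refine ⟨comparisonKernel lam (max pil pib * C₀) m, ?_, fun M _ => ?_⟩
  · rintro u u' hu hu' ⟨M₁, hM₁⟩ ⟨M₂, hM₂⟩ - -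
    have huM : ∀ e, |u e| ≤ max M₁ M₂ := fun e => (hM₁ e).trans (le_max_left _ _)
    have hu'M : ∀ e, |u' e| ≤ max M₁ M₂ := fun e => (hM₂ e).trans (le_max_right _ _)
    refine ⟨measurable_comparisonKernel _ _ m hu hu', fun z => ?_⟩
    rw [fm_sub_fm, ← integral_add_compl (hγmeas (measurableSet_singleton 0))
      (integrable_comparisonKernel_mul hlam (by positivity) hνS hu hu' huM hu'M)]
    exact add_le_add (iInf_f1m_sub_le hlam hνS hηmeas hu hu' huM hu'M hpη z)
      (integral_iInf_f2m_sub_le hlam hνS hγmeas hηmeas hηint hKmeas hKprob hdis hu hu' huM hu'M hpη)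
  · exact ⟨exp (-(lam * (M + max pil pib * C₀))), exp (lam * (m + π / 2)) - 1, exp_pos _,
      sub_pos.2 (one_lt_exp_iff.2 (by positivity)),
      fun u u' _ _ _ _ hu _ e => comparisonKernel_bounds hlam (by positivity) m (hu e)⟩

/-- **Comparison structure of the approximating drivers**: for every `m ≥ 1` there is a map
assigning to each pair of bounded Borel square-`ν`-integrable functions `u, u'` a Borel
function `k_m(u,u')` such that
(i) `f_m(z,u) − f_m(z,u') ≤ ∫ k_m(u,u')(e) (u(e) − u'(e)) ν(de)` for all `z`, and
(ii) for every `M > 0` there are constants `C̲_{M,m}, C̄_{M,m} > 0` such that whenever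
`|u| ≤ M` and `|u'| ≤ M` pointwise, one has
`(−1 + C̲_{M,m}) 1_{|e|>1/m} ≤ k_m(u,u')(e) ≤ C̄_{M,m} 1_{|e|>1/m}` for all `e`. -/
theorem fm_comparison_structure
    (ν : Measure ℝ) [SigmaFinite ν]
    (hν0 : ν {0} = 0)
    (hν2 : (∫⁻ e, ENNReal.ofReal (min 1 (e ^ 2)) ∂ν) < ⊤)
    (η γ : ℝ → ℝ) (hηmeas : Measurable η) (hγmeas : Measurable γ)
    (C₀ : ℝ) (hC₀ : 0 < C₀)
    (hηb : ∀ e, |η e| ≤ C₀ * min 1 |e|)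
    (hγb : ∀ e, |γ e| ≤ C₀ * min 1 |e|)
    (hηint : Integrable η ν)
    (μ : Measure ℝ)
    (hμ : ∀ B : Set ℝ, MeasurableSet B → μ B = ν (γ ⁻¹' (B \ {0})))
    (K : ℝ → Measure ℝ) (hKmeas : Measurable K)
    (hKprob : ∀ᵐ g ∂μ.restrict ({0}ᶜ : Set ℝ),
      K g Set.univ = 1 ∧ K g {e | γ e = g} = 1)
    (hdis : ∀ B : Set ℝ, MeasurableSet B →
      ν (B ∩ {e | γ e ≠ 0}) = ∫⁻ g in ({0}ᶜ : Set ℝ), K g B ∂μ)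
    (lam pil pib : ℝ) (hlam : 0 < lam) (hpil : 0 < pil) (hpib : 0 < pib)
    (Cke : ℝ)
    (m : ℕ) (hm : 1 ≤ m) :
    ∃ k : (ℝ → ℝ) → (ℝ → ℝ) → ℝ → ℝ,
      (∀ u u' : ℝ → ℝ, Measurable u → Measurable u' →
        (∃ M : ℝ, ∀ e, |u e| ≤ M) → (∃ M : ℝ, ∀ e, |u' e| ≤ M) →
        Integrable (fun e => (u e) ^ 2) ν → Integrable (fun e => (u' e) ^ 2) ν →
        Measurable (k u u') ∧
        ∀ z : ℝ,
          fm ν μ η γ K lam Cke pil pib m z u - fm ν μ η γ K lam Cke pil pib m z u'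
            ≤ ∫ e, k u u' e * (u e - u' e) ∂ν) ∧
      (∀ M : ℝ, 0 < M →
        ∃ Cl Cu : ℝ, 0 < Cl ∧ 0 < Cu ∧
          ∀ u u' : ℝ → ℝ, Measurable u → Measurable u' →
            Integrable (fun e => (u e) ^ 2) ν → Integrable (fun e => (u' e) ^ 2) ν →
            (∀ e, |u e| ≤ M) → (∀ e, |u' e| ≤ M) →
            ∀ e : ℝ,
              (-1 + Cl) * (if 1 / (m : ℝ) < |e| then 1 else 0) ≤ k u u' e ∧
              k u u' e ≤ Cu * (if 1 / (m : ℝ) < |e| then 1 else 0)) :=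
  fm_comparison_structure_general ν hν2 η γ hηmeas hγmeas C₀ hC₀ hηb hηint μ K hKmeas hKprob hdis
    lam pil pib hlam hpil hpib Cke m hm
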